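/- With the Wolfe sets P_γ(ε, L) as defined, for any ordinals γ and η and any set L of measures: {l : (l,G) ∈ P_{γ+η}(ε,L) for some G} ⊆ ({l : (l,G) ∈ P_γ(ε,L) for some G})^{(η)}, where the superscript (η) denotes the η-th derived set with respect to the weak* topology. -/

import Mathlib

open MeasureTheory Filter Topology Ordinal

/-- Integration of a function against a signed measure, via the Jordan decomposition. -/
noncomputable def sInt {K : Type*} [MeasurableSpace K] (μ : SignedMeasure K) (f : K → ℝ) : ℝ :=
  (∫ x, f x ∂μ.toJordanDecomposition.posPart) - ∫ x, f x ∂μ.toJordanDecomposition.negPart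

/-- Weak* convergence of a sequence of signed measures on `K`, tested against `C(K, ℝ)`. -/
def wsTendsto {K : Type*} [TopologicalSpace K] [MeasurableSpace K]
    (μs : ℕ → SignedMeasure K) (μ : SignedMeasure K) : Prop :=
  ∀ f : C(K, ℝ), Tendsto (fun n => sInt (μs n) f) atTop (𝓝 (sInt μ f))

/-- The weak* topology on signed measures, induced by testing against `C(K, ℝ)`. -/
noncomputable instance weakStarTop (K : Type*) [TopologicalSpace K] [MeasurableSpace K] :
    TopologicalSpace (SignedMeasure K) :=
  TopologicalSpace.induced (fun μ (f : C(K, ℝ)) => sInt μ f) Pi.topologicalSpace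

/-- The Wolfe sets `P_α(ε, B)` of the paper (Definition 3). -/
noncomputable def wolfeP {K : Type*} [TopologicalSpace K] [MeasurableSpace K]
    (ε : ℝ) (B : Set (SignedMeasure K)) (o : Ordinal) : Set (SignedMeasure K × Set K) :=
  Ordinal.limitRecOn o
    {p | p.1 ∈ B ∧ IsOpen p.2 ∧ ε ≤ ((p.1.totalVariation) p.2).toReal}
    (fun _ Pa =>
      {p | (p.1 ∈ B ∧ IsOpen p.2 ∧ ε ≤ ((p.1.totalVariation) p.2).toReal) ∧
        ∃ (μs : ℕ → SignedMeasure K) (Gs : ℕ → Set K),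
          (∀ n, (μs n, Gs n) ∈ Pa) ∧ wsTendsto μs p.1 ∧
          Pairwise (Function.onFun Disjoint Gs) ∧ closure (⋃ n, Gs n) ⊆ p.2})
    (fun o _ ih =>
      {p | (p.1 ∈ B ∧ IsOpen p.2 ∧ ε ≤ ((p.1.totalVariation) p.2).toReal) ∧
        ∃ (αs : ℕ → Ordinal) (h : ∀ n, αs n < o) (μs : ℕ → SignedMeasure K) (Gs : ℕ → Set K),
          StrictMono αs ∧ (⨆ n, αs n) = o ∧
          (∀ n, (μs n, Gs n) ∈ ih (αs n) (h n)) ∧ wsTendsto μs p.1 ∧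
          Pairwise (Function.onFun Disjoint Gs) ∧ closure (⋃ n, Gs n) ⊆ p.2})

/-- The `o`-th Cantor–Bendixson derived set of `A`. -/
noncomputable def cbIter {X : Type*} [TopologicalSpace X] (A : Set X) (o : Ordinal) : Set X :=
  Ordinal.limitRecOn o A (fun _ S => {x | AccPt x (Filter.principal S)})
    (fun o _ ih => ⋂ i : {b : Ordinal // b < o}, ih i.1 i.2)

/-!
A pair in `P_{α+1}` is the weak* limit of measures `μₙ` from `P_α` with `|μₙ|(Gₙ) ≥ ε` on
pairwise disjoint open sets `Gₙ`. A finite measure gives mass `≥ ε` to only finitely many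
pairwise disjoint sets, so `μₙ` equals the limit for only finitely many `n`, and the limit is an
accumulation point of the measures of `P_α`. Induction on `η` then proves the claim, with the
limit stages handled by the monotonicity `P_β ⊆ P_α` for `α ≤ β`.
-/

open Function

theorem accPt_principal_of_tendsto_of_finite_eq {X : Type*} [TopologicalSpace X] {S : Set X}
    {u : ℕ → X} {x : X} (hu : Tendsto u atTop (𝓝 x)) (huS : ∀ n, u n ∈ S)
    (hfin : {n | u n = x}.Finite) : AccPt x (𝓟 S) := by
  have hne : ∀ᶠ n in atTop, u n ≠ x := Nat.cofinite_eq_atTop ▸ hfin.eventually_cofinite_notMem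
  exact accPt_iff_frequently.2 <| hu.frequently (hne.mono fun n hn ↦ ⟨hn, huS n⟩).frequently

theorem finite_setOf_eq_of_le_totalVariation {X : Type*} [MeasurableSpace X] {ε : ℝ} (hε : 0 < ε)
    {μs : ℕ → SignedMeasure X} {Gs : ℕ → Set X} (hGs : ∀ n, MeasurableSet (Gs n))
    (hdis : Pairwise (Disjoint on Gs)) (hle : ∀ n, ε ≤ ((μs n).totalVariation (Gs n)).toReal)
    (l : SignedMeasure X) : {n | μs n = l}.Finite := by
  refine (Measure.finite_const_le_meas_of_disjoint_iUnion l.totalVariation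
    (ENNReal.ofReal_pos.2 hε) hGs hdis (measure_ne_top _ _)).subset fun n hn ↦ ?_
  rw [Set.mem_ofPred_eq, ← hn]
  exact ENNReal.ofReal_le_of_le_toReal (hle n)

section WolfeSets

variable {K : Type*} [TopologicalSpace K] [MeasurableSpace K] {ε : ℝ} {B : Set (SignedMeasure K)}

theorem wsTendsto_iff_tendsto {μs : ℕ → SignedMeasure K} {l : SignedMeasure K} :
    wsTendsto μs l ↔ Tendsto μs atTop (𝓝 l) := by
  have hind : Topology.IsInducing fun μ (f : C(K, ℝ)) ↦ sInt μ f := ⟨rfl⟩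
  rw [hind.tendsto_nhds_iff, tendsto_pi_nhds]
  rfl

def WolfeApprox (μs : ℕ → SignedMeasure K) (Gs : ℕ → Set K) (p : SignedMeasure K × Set K) :
    Prop :=
  wsTendsto μs p.1 ∧ Pairwise (Disjoint on Gs) ∧ closure (⋃ n, Gs n) ⊆ p.2

theorem WolfeApprox.shift {μs : ℕ → SignedMeasure K} {Gs : ℕ → Set K}
    {p : SignedMeasure K × Set K} (h : WolfeApprox μs Gs p) (k : ℕ) :
    WolfeApprox (fun n ↦ μs (n + k)) (fun n ↦ Gs (n + k)) p :=
  ⟨fun f ↦ (h.1 f).comp (tendsto_add_atTop_nat k),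
    fun _ _ hij ↦ h.2.1 (by omega),
    (closure_mono (Set.iUnion_subset fun n ↦ Set.subset_iUnion Gs (n + k))).trans h.2.2⟩

def wolfeBase (ε : ℝ) (B : Set (SignedMeasure K)) : Set (SignedMeasure K × Set K) :=
  {p | p.1 ∈ B ∧ IsOpen p.2 ∧ ε ≤ (p.1.totalVariation p.2).toReal}

theorem wolfeP_zero : wolfeP ε B 0 = wolfeBase ε B := by
  rw [wolfeP, limitRecOn_zero]; rfl

theorem mem_wolfeP_add_one {p : SignedMeasure K × Set K} {o : Ordinal} :
    p ∈ wolfeP ε B (o + 1) ↔ p ∈ wolfeBase ε B ∧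
      ∃ μs Gs, (∀ n, (μs n, Gs n) ∈ wolfeP ε B o) ∧ WolfeApprox μs Gs p := by
  rw [wolfeP, limitRecOn_add_one]
  rfl

theorem mem_wolfeP_of_isSuccLimit {p : SignedMeasure K × Set K} {o : Ordinal}
    (ho : Order.IsSuccLimit o) :
    p ∈ wolfeP ε B o ↔ p ∈ wolfeBase ε B ∧
      ∃ αs : ℕ → Ordinal, (∀ n, αs n < o) ∧ StrictMono αs ∧ (⨆ n, αs n) = o ∧
        ∃ μs Gs, (∀ n, (μs n, Gs n) ∈ wolfeP ε B (αs n)) ∧ WolfeApprox μs Gs p := by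
  rw [wolfeP, limitRecOn_limit _ _ _ _ ho]
  constructor
  · rintro ⟨hp, αs, hαs, μs, Gs, hmono, hsup, hmem, happrox⟩
    exact ⟨hp, αs, hαs, hmono, hsup, μs, Gs, hmem, happrox⟩
  · rintro ⟨hp, αs, hαs, hmono, hsup, μs, Gs, hmem, happrox⟩
    exact ⟨hp, αs, hαs, μs, Gs, hmono, hsup, hmem, happrox⟩

theorem wolfeP_subset_wolfeBase (o : Ordinal) : wolfeP ε B o ⊆ wolfeBase ε B := by
  rcases zero_or_succ_or_isSuccLimit o with rfl | ⟨a, rfl⟩ | ho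
  · exact wolfeP_zero.subset
  · exact fun p hp ↦ (mem_wolfeP_add_one.1 hp).1
  · exact fun p hp ↦ ((mem_wolfeP_of_isSuccLimit ho).1 hp).1

theorem mem_wolfeP_of_wolfeApprox {α : Ordinal} {αs : ℕ → Ordinal}
    (hanti : ∀ n, ∀ β ≤ αs n, wolfeP ε B (αs n) ⊆ wolfeP ε B β) (hα : ∀ n, α ≤ αs n)
    {p : SignedMeasure K × Set K} {μs : ℕ → SignedMeasure K} {Gs : ℕ → Set K}
    (hp : p ∈ wolfeBase ε B) (hmem : ∀ n, (μs n, Gs n) ∈ wolfeP ε B (αs n))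
    (happrox : WolfeApprox μs Gs p) : p ∈ wolfeP ε B α := by
  rcases zero_or_succ_or_isSuccLimit α with rfl | ⟨ρ, rfl⟩ | hα_lim
  · rwa [wolfeP_zero]
  · exact mem_wolfeP_add_one.2 ⟨hp, μs, Gs,
      fun n ↦ hanti n ρ ((Order.le_succ ρ).trans (hα n)) (hmem n), happrox⟩
  · -- the cofinal sequence required at the limit `α` is borrowed from a member of `P_α`
    obtain ⟨-, βs, hβs, hmono, hsup, -⟩ :=
      (mem_wolfeP_of_isSuccLimit hα_lim).1 (hanti 0 α (hα 0) (hmem 0))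
    exact (mem_wolfeP_of_isSuccLimit hα_lim).2 ⟨hp, βs, hβs, hmono, hsup, μs, Gs,
      fun n ↦ hanti n _ ((hβs n).le.trans (hα n)) (hmem n), happrox⟩

theorem wolfeP_antitone : Antitone (wolfeP ε B) := by
  suffices H : ∀ α' α, α ≤ α' → wolfeP ε B α' ⊆ wolfeP ε B α from fun α α' h ↦ H α' α h
  intro α'
  induction α' using WellFoundedLT.induction with | _ α' IH => ?_
  intro α hα p hp
  rcases hα.eq_or_lt with rfl | hlt
  · exact hp
  rcases zero_or_succ_or_isSuccLimit α' with rfl | ⟨δ, rfl⟩ | hlim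
  · exact absurd hlt not_lt_zero
  · obtain ⟨hp0, μs, Gs, hmem, happrox⟩ := mem_wolfeP_add_one.1 hp
    exact mem_wolfeP_of_wolfeApprox (fun _ ↦ IH δ (Order.lt_succ δ))
      (fun _ ↦ Order.lt_succ_iff.1 hlt) hp0 hmem happrox
  · obtain ⟨hp0, αs, hαs, hmono, hsup, μs, Gs, hmem, happrox⟩ :=
      (mem_wolfeP_of_isSuccLimit hlim).1 hp
    obtain ⟨k, hk⟩ : ∃ k, α ≤ αs k := by
      by_contra! h
      exact (ciSup_le fun n ↦ (h n).le).not_gt (hsup ▸ hlt)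
    exact mem_wolfeP_of_wolfeApprox (αs := fun n ↦ αs (n + k)) (fun _ ↦ IH _ (hαs _))
      (fun n ↦ hk.trans (hmono.monotone (by omega))) hp0 (fun n ↦ hmem (n + k)) (happrox.shift k)

theorem accPt_of_mem_wolfeP_add_one [OpensMeasurableSpace K] (hε : 0 < ε) {α : Ordinal}
    {l : SignedMeasure K} {G : Set K} (h : (l, G) ∈ wolfeP ε B (α + 1)) :
    AccPt l (𝓟 {μ | ∃ G, (μ, G) ∈ wolfeP ε B α}) := by
  obtain ⟨-, μs, Gs, hmem, htend, hdis, -⟩ := mem_wolfeP_add_one.1 h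
  have hbase n := (wolfeP_subset_wolfeBase α (hmem n)).2
  exact accPt_principal_of_tendsto_of_finite_eq (wsTendsto_iff_tendsto.1 htend)
    (fun n ↦ ⟨Gs n, hmem n⟩) (finite_setOf_eq_of_le_totalVariation hε
      (fun n ↦ (hbase n).1.measurableSet) hdis (fun n ↦ (hbase n).2) l)

end WolfeSets

section CantorBendixson

variable {X : Type*} [TopologicalSpace X] (A : Set X)

theorem cbIter_zero : cbIter A 0 = A := by
  rw [cbIter, limitRecOn_zero]

theorem cbIter_add_one (o : Ordinal) : cbIter A (o + 1) = {x | AccPt x (𝓟 (cbIter A o))} := by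
  rw [cbIter, limitRecOn_add_one]; rfl

theorem cbIter_of_isSuccLimit {o : Ordinal} (ho : Order.IsSuccLimit o) :
    cbIter A o = ⋂ b : {b : Ordinal // b < o}, cbIter A b := by
  rw [cbIter, limitRecOn_limit _ _ _ _ ho]; rfl

end CantorBendixson

theorem stmt12_general {K : Type*} [TopologicalSpace K]
    [MeasurableSpace K] [BorelSpace K]
    (ε : ℝ) (hε : 0 < ε) (L : Set (SignedMeasure K)) (γ η : Ordinal) :
    {l : SignedMeasure K | ∃ G, (l, G) ∈ wolfeP ε L (γ + η)} ⊆
      cbIter {l : SignedMeasure K | ∃ G, (l, G) ∈ wolfeP ε L γ} η := by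
  induction η using Ordinal.limitRecOn with
  | zero => rw [add_zero, cbIter_zero]
  | add_one β IH =>
    rintro l ⟨G, hG⟩
    rw [← add_assoc] at hG
    rw [cbIter_add_one]
    exact (accPt_of_mem_wolfeP_add_one hε hG).mono (principal_mono.2 IH)
  | limit β hβ IH =>
    rintro l ⟨G, hG⟩
    rw [cbIter_of_isSuccLimit _ hβ, Set.mem_iInter]
    exact fun b ↦ IH b.1 b.2 ⟨G, wolfeP_antitone (add_le_add_right b.2.le γ) hG⟩

/-- The measures appearing at stage `γ + η` of the Wolfe sets lie in the `η`-th weak*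
derived set of the measures appearing at stage `γ`. -/
theorem stmt12 {K : Type*} [TopologicalSpace K] [CompactSpace K] [T2Space K]
    [MeasurableSpace K] [BorelSpace K]
    (ε : ℝ) (hε : 0 < ε) (L : Set (SignedMeasure K)) (γ η : Ordinal) :
    {l : SignedMeasure K | ∃ G, (l, G) ∈ wolfeP ε L (γ + η)} ⊆
      cbIter {l : SignedMeasure K | ∃ G, (l, G) ∈ wolfeP ε L γ} η :=
  stmt12_general ε hε L γ η
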